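/- arXiv:2308.15356 — 6 statements merged into one kernel-verified Lean document; each statement's English description precedes it below -/
import Mathlib

section
/- Let D ≥ 1, let |ψ⟩ be a unit vector in ℂ^D and let ε ≥ 0. Let σ be any D×D density matrix (positive semidefinite complex matrix with trace 1) satisfying the fidelity condition ⟨ψ| σ |ψ⟩ ≥ 1 − ε. Then for every real μ ≥ −1 the matrix (1+μ)·|ψ⟩⟨ψ| + (1/2)·(√(μ² + 4ε(1+μ)) − μ)·I_D − σ is positive semidefinite; i.e. σ ⪯ (1+μ)|ψ⟩⟨ψ| + (1/2)(√(μ²+4ε(1+μ)) − μ)·I_D in the Loewner order. -/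
/-!
Write `x = a ψ + y` with `y ⟂ ψ` and put `F = ⟨ψ|σ|ψ⟩`. The seminorm `x ↦ √⟨x|σ|x⟩` is
subadditive, so `⟨x|σ|x⟩ ≤ (|a| √F + √⟨y|σ|y⟩)²`; compressing `σ` to `ψ^⟂`, where its trace is
`1 - F`, gives `⟨y|σ|y⟩ ≤ (1 - F) ‖y‖²`, because a positive semidefinite matrix is dominated by
its trace. What is left is a real inequality in `(|a|, ‖y‖)`: since
`λ = ½ (√(μ² + 4ε(1+μ)) - μ)` solves `λ (λ + μ) = ε (1 + μ)`, it reduces to the nonnegativity of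
a binary quadratic form whose determinant is a nonnegative multiple of `(1 + μ) (ε - (1 - F)) ≥ 0`.
-/

open Matrix ComplexOrder

open scoped MatrixOrder

lemma quadratic_nonneg_of_sq_le_mul {A B C x y : ℝ} (hA : 0 ≤ A) (hC : 0 ≤ C)
    (h : B ^ 2 ≤ A * C) : 0 ≤ A * x ^ 2 - 2 * B * x * y + C * y ^ 2 := by
  rcases hA.eq_or_lt with rfl | hA
  · have hB : B = 0 := by nlinarith
    subst hB; nlinarith
  · have : 0 ≤ A * (A * x ^ 2 - 2 * B * x * y + C * y ^ 2) := by
      nlinarith [sq_nonneg (A * x - B * y), mul_nonneg (sub_nonneg.2 h) (sq_nonneg y)]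
    exact (mul_nonneg_iff_of_pos_left hA).mp this

lemma root_of_two_mul_add_eq_sqrt {ε μ l : ℝ} (hε : 0 ≤ ε) (hμ : -1 ≤ μ)
    (hl : 2 * l + μ = √(μ ^ 2 + 4 * ε * (1 + μ))) :
    0 ≤ l ∧ 0 ≤ l + μ ∧ l * (l + μ) = ε * (1 + μ) := by
  have hdisc : 0 ≤ μ ^ 2 + 4 * ε * (1 + μ) := by nlinarith
  have hsq := Real.sq_sqrt hdisc
  have habs : |μ| ≤ 2 * l + μ := by
    rw [hl, ← Real.sqrt_sq_eq_abs]
    exact Real.sqrt_le_sqrt (by nlinarith)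
  refine ⟨by linarith [le_abs_self μ], by linarith [neg_le_abs μ], ?_⟩
  rw [← hl] at hsq
  linarith

lemma sq_add_le_of_root {ε μ l u v α N : ℝ} (hμ : -1 ≤ μ) (hl : 0 ≤ l) (hlμ : 0 ≤ l + μ)
    (hl_eq : l * (l + μ) = ε * (1 + μ)) (hN : 0 ≤ N)
    (hu : 1 - ε ≤ u ^ 2) (hu1 : u ^ 2 ≤ 1) (hv : v ^ 2 ≤ (1 - u ^ 2) * N) :
    (α * u + v) ^ 2 ≤ (1 + μ + l) * α ^ 2 + l * N := by
  set t := 1 - u ^ 2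
  have ht0 : 0 ≤ t := by linarith
  have hεt : t * (1 + μ) ≤ ε * (1 + μ) :=
    mul_le_mul_of_nonneg_right (by linarith) (by linarith)
  -- `s ↦ s (s + μ)` is increasing on `[-μ/2, ∞)`, and `t (t + μ) ≤ t (1 + μ) ≤ l (l + μ)`.
  have htl : t ≤ l := by
    by_contra! h
    nlinarith
  rcases ht0.eq_or_lt with ht | ht
  · have hv0 : v = 0 := by nlinarith
    subst hv0
    nlinarith
  · -- After multiplying by `t`, the gap is a quadratic form in `(α, v)` with
    -- determinant `t (1 + μ) (ε - t) ≥ 0`.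
    have := quadratic_nonneg_of_sq_le_mul (x := α) (y := v) (B := t * u)
      (mul_nonneg (by linarith : 0 ≤ μ + l + t) ht.le) (sub_nonneg.2 htl) (by nlinarith)
    nlinarith

section

variable {𝕜 n : Type*} [RCLike 𝕜] [Fintype n]

lemma norm_toLp_sq (v : n → 𝕜) : ‖WithLp.toLp 2 v‖ ^ 2 = RCLike.re (star v ⬝ᵥ v) := by
  rw [norm_sq_eq_re_inner (𝕜 := 𝕜), EuclideanSpace.inner_toLp_toLp, dotProduct_comm]

lemma dotProduct_star_self_eq (v : n → 𝕜) :
    star v ⬝ᵥ v = (‖WithLp.toLp 2 v‖ : 𝕜) ^ 2 := by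
  rw [← inner_self_eq_norm_sq_to_K, EuclideanSpace.inner_toLp_toLp, dotProduct_comm]

lemma norm_dotProduct_le (u v : n → 𝕜) :
    ‖star u ⬝ᵥ v‖ ≤ ‖WithLp.toLp 2 u‖ * ‖WithLp.toLp 2 v‖ := by
  simpa [EuclideanSpace.inner_toLp_toLp, dotProduct_comm] using
    norm_inner_le_norm (𝕜 := 𝕜) (WithLp.toLp 2 u) (WithLp.toLp 2 v)

lemma norm_toLp_add_sq_of_dotProduct_eq_zero {u v : n → 𝕜} (h : star u ⬝ᵥ v = 0) :
    ‖WithLp.toLp 2 (u + v)‖ ^ 2 = ‖WithLp.toLp 2 u‖ ^ 2 + ‖WithLp.toLp 2 v‖ ^ 2 := by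
  simp only [sq, WithLp.toLp_add]
  refine norm_add_sq_eq_norm_sq_add_norm_sq_of_inner_eq_zero (𝕜 := 𝕜) _ _ ?_
  rw [EuclideanSpace.inner_toLp_toLp, dotProduct_comm, h]

namespace Matrix

lemma dotProduct_vecMulVec_star_mulVec (ψ x : n → 𝕜) :
    star x ⬝ᵥ vecMulVec ψ (star ψ) *ᵥ x = (‖star ψ ⬝ᵥ x‖ : 𝕜) ^ 2 := by
  rw [vecMulVec_mulVec, op_smul_eq_smul, dotProduct_smul, smul_eq_mul, ← RCLike.mul_conj,
    ← RCLike.star_def, star_dotProduct, star_star]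

lemma re_dotProduct_conjTranspose_mul_self_mulVec (B : Matrix n n 𝕜) (x : n → 𝕜) :
    RCLike.re (star x ⬝ᵥ (Bᴴ * B) *ᵥ x) = ‖WithLp.toLp 2 (B *ᵥ x)‖ ^ 2 := by
  rw [norm_toLp_sq, ← mulVec_mulVec, dotProduct_mulVec, ← star_mulVec]

lemma re_dotProduct_smul_mulVec_smul (M : Matrix n n 𝕜) (c : 𝕜) (v : n → 𝕜) :
    RCLike.re (star (c • v) ⬝ᵥ M *ᵥ (c • v)) = ‖c‖ ^ 2 * RCLike.re (star v ⬝ᵥ M *ᵥ v) := by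
  rw [star_smul, mulVec_smul, smul_dotProduct, dotProduct_smul, smul_smul, smul_eq_mul,
    RCLike.star_def, RCLike.conj_mul, ← RCLike.ofReal_pow, RCLike.re_ofReal_mul]

lemma posSemidef_norm_sq_smul_one_sub_vecMulVec [DecidableEq n] (y : n → 𝕜) :
    ((‖WithLp.toLp 2 y‖ : 𝕜) ^ 2 • (1 : Matrix n n 𝕜) - vecMulVec y (star y)).PosSemidef := by
  refine .of_dotProduct_mulVec_nonneg ?_ fun x ↦ ?_
  · exact (isHermitian_one.smul (by simp [IsSelfAdjoint])).sub
      (posSemidef_vecMulVec_self_star y).isHermitian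
  · rw [sub_mulVec, smul_mulVec, one_mulVec, dotProduct_sub, dotProduct_smul, smul_eq_mul,
      dotProduct_vecMulVec_star_mulVec, dotProduct_star_self_eq]
    norm_cast
    rw [sub_nonneg, ← mul_pow]
    exact pow_le_pow_left₀ (norm_nonneg _) (norm_dotProduct_le y x) 2

namespace PosSemidef

lemma of_re_dotProduct_mulVec_nonneg {M : Matrix n n 𝕜} (hM : M.IsHermitian)
    (h : ∀ x, 0 ≤ RCLike.re (star x ⬝ᵥ M *ᵥ x)) : M.PosSemidef :=
  .of_dotProduct_mulVec_nonneg hM fun x ↦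
    RCLike.nonneg_iff.2 ⟨h x, hM.im_star_dotProduct_mulVec_self x⟩

variable [DecidableEq n] {M : Matrix n n 𝕜}

lemma sqrt_re_dotProduct_mulVec_add_le (hM : M.PosSemidef) (u v : n → 𝕜) :
    √(RCLike.re (star (u + v) ⬝ᵥ M *ᵥ (u + v)))
      ≤ √(RCLike.re (star u ⬝ᵥ M *ᵥ u)) + √(RCLike.re (star v ⬝ᵥ M *ᵥ v)) := by
  obtain ⟨B, rfl⟩ := CStarAlgebra.nonneg_iff_eq_star_mul_self.mp hM.nonneg
  simp only [star_eq_conjTranspose, re_dotProduct_conjTranspose_mul_self_mulVec,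
    Real.sqrt_sq (norm_nonneg _)]
  rw [mulVec_add, WithLp.toLp_add]
  exact norm_add_le (WithLp.toLp 2 (B *ᵥ u)) (WithLp.toLp 2 (B *ᵥ v))

lemma trace_mul_nonneg {A : Matrix n n 𝕜} (hM : M.PosSemidef) (hA : A.PosSemidef) :
    0 ≤ (M * A).trace := by
  obtain ⟨C, rfl⟩ := CStarAlgebra.nonneg_iff_eq_star_mul_self.mp hA.nonneg
  rw [← Matrix.mul_assoc, trace_mul_comm, ← Matrix.mul_assoc, star_eq_conjTranspose]
  exact (hM.mul_mul_conjTranspose_same C).trace_nonneg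

lemma re_dotProduct_mulVec_le (hM : M.PosSemidef) (y : n → 𝕜) :
    RCLike.re (star y ⬝ᵥ M *ᵥ y) ≤ RCLike.re M.trace * ‖WithLp.toLp 2 y‖ ^ 2 := by
  have h := (RCLike.nonneg_iff.1
    (hM.trace_mul_nonneg (posSemidef_norm_sq_smul_one_sub_vecMulVec y))).1
  rw [mul_sub, trace_sub, mul_smul_comm, mul_one, trace_smul, mul_vecMulVec, trace_vecMulVec,
    dotProduct_comm, map_sub, smul_eq_mul, ← RCLike.ofReal_pow, RCLike.re_ofReal_mul] at h
  linarith

lemma re_dotProduct_mulVec_le_of_dotProduct_eq_zero (hM : M.PosSemidef) {ψ y : n → 𝕜}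
    (hψ : star ψ ⬝ᵥ ψ = 1) (hy : star ψ ⬝ᵥ y = 0) :
    RCLike.re (star y ⬝ᵥ M *ᵥ y)
      ≤ (RCLike.re M.trace - RCLike.re (star ψ ⬝ᵥ M *ᵥ ψ)) * ‖WithLp.toLp 2 y‖ ^ 2 := by
  set Q : Matrix n n 𝕜 := 1 - vecMulVec ψ (star ψ)
  have hQ : Qᴴ = Q := isHermitian_one.sub (posSemidef_vecMulVec_self_star ψ).isHermitian
  have hQy : Q *ᵥ y = y := by
    rw [sub_mulVec, one_mulVec, vecMulVec_mulVec, hy, MulOpposite.op_zero, zero_smul, sub_zero]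
  have hQQ : Q * Q = Q := by
    rw [sub_mul, one_mul, mul_sub, mul_one, vecMulVec_mul_vecMulVec, hψ, one_smul, sub_self,
      sub_zero]
  have h := (hM.conjTranspose_mul_mul_same Q).re_dotProduct_mulVec_le y
  have hquad : star y ⬝ᵥ (Qᴴ * M * Q) *ᵥ y = star y ⬝ᵥ M *ᵥ y := by
    rw [← mulVec_mulVec, ← mulVec_mulVec, hQy, dotProduct_mulVec, ← star_mulVec, hQy]
  have htrace : (Qᴴ * M * Q).trace = M.trace - star ψ ⬝ᵥ M *ᵥ ψ := by
    rw [hQ, trace_mul_cycle, hQQ, sub_mul, one_mul, trace_sub, vecMulVec_mul, trace_vecMulVec,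
      dotProduct_comm, ← dotProduct_mulVec]
  rwa [hquad, htrace, map_sub] at h

end PosSemidef

end Matrix

lemma re_dotProduct_mulVec_le_of_fidelity [DecidableEq n] {σ : Matrix n n 𝕜}
    (hσ : σ.PosSemidef) (hσtr : RCLike.re σ.trace ≤ 1) {ψ : n → 𝕜} (hψ : star ψ ⬝ᵥ ψ = 1)
    {ε μ l : ℝ} (hfid : 1 - ε ≤ RCLike.re (star ψ ⬝ᵥ σ *ᵥ ψ)) (hμ : -1 ≤ μ) (hl : 0 ≤ l)
    (hlμ : 0 ≤ l + μ) (hl_eq : l * (l + μ) = ε * (1 + μ)) (x : n → 𝕜) :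
    RCLike.re (star x ⬝ᵥ σ *ᵥ x)
      ≤ (1 + μ) * ‖star ψ ⬝ᵥ x‖ ^ 2 + l * ‖WithLp.toLp 2 x‖ ^ 2 := by
  set a := star ψ ⬝ᵥ x
  set y := x - a • ψ
  set F := RCLike.re (star ψ ⬝ᵥ σ *ᵥ ψ)
  set S := RCLike.re (star y ⬝ᵥ σ *ᵥ y)
  have hx : a • ψ + y = x := add_sub_cancel _ _
  have hy : star ψ ⬝ᵥ y = 0 := by
    rw [dotProduct_sub, dotProduct_smul, hψ, smul_eq_mul, mul_one, sub_self]
  have hψ_norm : ‖WithLp.toLp 2 ψ‖ ^ 2 = 1 := by rw [norm_toLp_sq, hψ, RCLike.one_re]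
  have hx_norm : ‖WithLp.toLp 2 x‖ ^ 2 = ‖a‖ ^ 2 + ‖WithLp.toLp 2 y‖ ^ 2 := by
    rw [← hx, norm_toLp_add_sq_of_dotProduct_eq_zero (by rw [star_smul, smul_dotProduct, hy,
      smul_zero]), WithLp.toLp_smul, norm_smul, mul_pow, hψ_norm, mul_one]
  have hF1 : F ≤ 1 := by
    have h := hσ.re_dotProduct_mulVec_le ψ
    rw [hψ_norm, mul_one] at h
    exact h.trans hσtr
  have hS : S ≤ (1 - F) * ‖WithLp.toLp 2 y‖ ^ 2 :=
    (hσ.re_dotProduct_mulVec_le_of_dotProduct_eq_zero hψ hy).trans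
      (mul_le_mul_of_nonneg_right (by linarith) (sq_nonneg _))
  have hmink : √(RCLike.re (star x ⬝ᵥ σ *ᵥ x)) ≤ ‖a‖ * √F + √S := by
    have h := hσ.sqrt_re_dotProduct_mulVec_add_le (a • ψ) y
    rwa [hx, re_dotProduct_smul_mulVec_smul, Real.sqrt_mul (sq_nonneg _),
      Real.sqrt_sq (norm_nonneg _)] at h
  have hF0 : 0 ≤ F := hσ.re_dotProduct_nonneg ψ
  have hS0 : 0 ≤ S := hσ.re_dotProduct_nonneg y
  calc RCLike.re (star x ⬝ᵥ σ *ᵥ x) = √(RCLike.re (star x ⬝ᵥ σ *ᵥ x)) ^ 2 :=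
        (Real.sq_sqrt (hσ.re_dotProduct_nonneg x)).symm
    _ ≤ (‖a‖ * √F + √S) ^ 2 := pow_le_pow_left₀ (Real.sqrt_nonneg _) hmink 2
    _ ≤ (1 + μ + l) * ‖a‖ ^ 2 + l * ‖WithLp.toLp 2 y‖ ^ 2 :=
        sq_add_le_of_root hμ hl hlμ hl_eq (sq_nonneg _) (by rwa [Real.sq_sqrt hF0])
          (by rwa [Real.sq_sqrt hF0]) (by rwa [Real.sq_sqrt hF0, Real.sq_sqrt hS0])
    _ = (1 + μ) * ‖a‖ ^ 2 + l * ‖WithLp.toLp 2 x‖ ^ 2 := by rw [hx_norm]; ring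

end

theorem operator_bound_for_eps_close_states_general
    (D : ℕ) (ψ : Fin D → ℂ) (hψ : star ψ ⬝ᵥ ψ = 1)
    (ε : ℝ) (hε : 0 ≤ ε)
    (σ : Matrix (Fin D) (Fin D) ℂ) (hσ : σ.PosSemidef) (hσtr : σ.trace = 1)
    (hfid : 1 - ε ≤ (star ψ ⬝ᵥ σ *ᵥ ψ).re)
    (μ : ℝ) (hμ : -1 ≤ μ) :
    ((1 + μ) • vecMulVec ψ (star ψ)
      + ((1 / 2) * (Real.sqrt (μ ^ 2 + 4 * ε * (1 + μ)) - μ)) • (1 : Matrix (Fin D) (Fin D) ℂ)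
      - σ).PosSemidef := by
  set l := (1 / 2) * (Real.sqrt (μ ^ 2 + 4 * ε * (1 + μ)) - μ)
  obtain ⟨hl, hlμ, hl_eq⟩ := root_of_two_mul_add_eq_sqrt (l := l) hε hμ (by ring)
  refine .of_re_dotProduct_mulVec_nonneg ?_ fun x ↦ ?_
  · exact (((posSemidef_vecMulVec_self_star ψ).isHermitian.smul (.all _)).add
      (isHermitian_one.smul (.all _))).sub hσ.isHermitian
  · have h := re_dotProduct_mulVec_le_of_fidelity hσ (by simp [hσtr]) hψ hfid hμ hl hlμ hl_eq x
    rw [sub_mulVec, add_mulVec, smul_mulVec, smul_mulVec, one_mulVec, dotProduct_sub,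
      dotProduct_add, dotProduct_smul, dotProduct_smul, dotProduct_vecMulVec_star_mulVec,
      dotProduct_star_self_eq]
    simp only [map_sub, map_add, RCLike.smul_re, ← RCLike.ofReal_pow, RCLike.ofReal_re]
    linarith

/-- Lemma 1: any state `σ` that is `ε`-close in fidelity to the unit vector `ψ`
satisfies `σ ⪯ (1+μ)|ψ⟩⟨ψ| + ½(√(μ²+4ε(1+μ)) − μ)·I` for every `μ ≥ −1`. -/
theorem operator_bound_for_eps_close_states
    (D : ℕ) (hD : 1 ≤ D) (ψ : Fin D → ℂ) (hψ : star ψ ⬝ᵥ ψ = 1)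
    (ε : ℝ) (hε : 0 ≤ ε)
    (σ : Matrix (Fin D) (Fin D) ℂ) (hσ : σ.PosSemidef) (hσtr : σ.trace = 1)
    (hfid : 1 - ε ≤ (star ψ ⬝ᵥ σ *ᵥ ψ).re)
    (μ : ℝ) (hμ : -1 ≤ μ) :
    ((1 + μ) • vecMulVec ψ (star ψ)
      + ((1 / 2) * (Real.sqrt (μ ^ 2 + 4 * ε * (1 + μ)) - μ)) • (1 : Matrix (Fin D) (Fin D) ℂ)
      - σ).PosSemidef :=
  operator_bound_for_eps_close_states_general D ψ hψ ε hε σ hσ hσtr hfid μ hμ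
end

section
/- Let D ≥ 1, let |ψ⟩ be a unit vector in ℂ^D and let ε ≥ 0. Let σ be any D×D density matrix satisfying ⟨ψ| σ |ψ⟩ ≥ 1 − ε. Then σ ⪯ |ψ⟩⟨ψ| + √ε · I_D in the Loewner order, i.e. |ψ⟩⟨ψ| + √ε·I_D − σ is positive semidefinite. -/
/-!
Write `x = a • ψ + y` with `y ⊥ ψ` and put `p = ψᴴσψ ≥ 1 - ε`. Cauchy–Schwarz for the
semi-inner product `uᴴσv` gives `|ψᴴσy|² ≤ p · yᴴσy`, and since `ψ` and `y / ‖y‖` are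
orthonormal, `p + yᴴσy / ‖y‖² ≤ tr σ = 1`. So `xᴴσx ≤ |a|² p + 2|a| √(p · yᴴσy) + yᴴσy`, and a
weighted AM–GM step bounds this by `|a|² + √ε ‖x‖²`; the weights balance exactly because
`1 - p ≤ ε`.
-/

open Matrix ComplexOrder

lemma sq_mul_add_two_mul_mul_add_le {e p A S Q C : ℝ} (he : 0 ≤ e) (hp₀ : 0 ≤ p) (hp : p ≤ 1)
    (hpe : 1 - e ^ 2 ≤ p) (hS : 0 ≤ S) (hQS : Q ≤ (1 - p) * S) (hCQ : C ^ 2 ≤ p * Q) :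
    A ^ 2 * p + 2 * A * C + Q ≤ A ^ 2 * (1 + e) + e * S := by
  have h1p : 1 - p ≤ e := by
    rcases le_total e 1 with h | h <;> nlinarith
  have hv : 0 ≤ e * S - Q := by nlinarith [mul_le_mul_of_nonneg_right h1p hS]
  have hpQ : p * Q ≤ (1 + e - p) * (e * S - Q) := by
    nlinarith [mul_le_mul_of_nonneg_left hQS (by positivity : 0 ≤ 1 + e),
      mul_nonneg (by linarith : 0 ≤ e ^ 2 - (1 - p)) hS]
  have hAC : (A * C) ^ 2 ≤ A ^ 2 * (1 + e - p) * (e * S - Q) := by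
    nlinarith [mul_le_mul_of_nonneg_left hCQ (sq_nonneg A),
      mul_le_mul_of_nonneg_left hpQ (sq_nonneg A)]
  have h2AC : 2 * (A * C) ≤ A ^ 2 * (1 + e - p) + (e * S - Q) := by
    have hu : 0 ≤ A ^ 2 * (1 + e - p) := mul_nonneg (sq_nonneg A) (by linarith)
    generalize A ^ 2 * (1 + e - p) = u at hu hAC
    generalize e * S - Q = v at hv hAC
    nlinarith [sq_nonneg (u - v)]
  linarith

namespace Matrix

variable {𝕜 n : Type*} [RCLike 𝕜] [Fintype n]

lemma star_smul_dotProduct_smul (c : 𝕜) (u v : n → 𝕜) :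
    star (c • u) ⬝ᵥ (c • v) = (‖c‖ ^ 2 : ℝ) * (star u ⬝ᵥ v) := by
  rw [star_smul, dotProduct_smul, smul_dotProduct, smul_eq_mul, smul_eq_mul, ← mul_assoc,
    RCLike.star_def, RCLike.mul_conj, RCLike.ofReal_pow]

lemma re_star_dotProduct_vecMulVec_mulVec (ψ x : n → 𝕜) :
    RCLike.re (star x ⬝ᵥ vecMulVec ψ (star ψ) *ᵥ x) = ‖star ψ ⬝ᵥ x‖ ^ 2 := by
  rw [vecMulVec_mulVec, op_smul_eq_smul, dotProduct_smul, star_dotProduct x ψ, smul_eq_mul,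
    RCLike.star_def, RCLike.mul_conj, ← RCLike.ofReal_pow, RCLike.ofReal_re]

lemma IsHermitian.star_dotProduct_mulVec {σ : Matrix n n 𝕜} (hσ : σ.IsHermitian) (u v : n → 𝕜) :
    star (star u ⬝ᵥ σ *ᵥ v) = star v ⬝ᵥ σ *ᵥ u := by
  rw [star_dotProduct, star_mulVec, star_star, ← dotProduct_mulVec, hσ.eq]

lemma IsHermitian.re_dotProduct_mulVec_smul_add {σ : Matrix n n 𝕜} (hσ : σ.IsHermitian) (a : 𝕜)
    (ψ y : n → 𝕜) :
    RCLike.re (star (a • ψ + y) ⬝ᵥ σ *ᵥ (a • ψ + y)) = ‖a‖ ^ 2 * RCLike.re (star ψ ⬝ᵥ σ *ᵥ ψ)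
      + 2 * RCLike.re (star a * (star ψ ⬝ᵥ σ *ᵥ y)) + RCLike.re (star y ⬝ᵥ σ *ᵥ y) := by
  simp only [star_add, star_smul, mulVec_add, mulVec_smul, dotProduct_add, add_dotProduct,
    dotProduct_smul, smul_dotProduct, smul_eq_mul, ← hσ.star_dotProduct_mulVec ψ y, map_add]
  simp only [RCLike.star_def, RCLike.mul_re, RCLike.conj_re, RCLike.conj_im, RCLike.mul_im,
    RCLike.norm_sq_eq_def, map_add, hσ.im_star_dotProduct_mulVec_self]
  ring

lemma PosSemidef.norm_dotProduct_mulVec_sq_le {σ : Matrix n n 𝕜} (hσ : σ.PosSemidef)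
    (u v : n → 𝕜) :
    ‖star u ⬝ᵥ σ *ᵥ v‖ ^ 2 ≤ RCLike.re (star u ⬝ᵥ σ *ᵥ u) * RCLike.re (star v ⬝ᵥ σ *ᵥ v) := by
  -- Cauchy–Schwarz in the seminormed inner product space `⟪u, v⟫ = uᴴσv` built from `hσ`
  have := @inner_mul_inner_self_le 𝕜 (n → 𝕜) _ (σ.toSeminormedAddCommGroup hσ)
    (σ.toInnerProductSpace hσ) u v
  change ‖(σ *ᵥ v) ⬝ᵥ star u‖ * ‖(σ *ᵥ u) ⬝ᵥ star v‖
    ≤ RCLike.re ((σ *ᵥ u) ⬝ᵥ star u) * RCLike.re ((σ *ᵥ v) ⬝ᵥ star v) at this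
  rwa [dotProduct_comm, dotProduct_comm (σ *ᵥ u), dotProduct_comm (σ *ᵥ u),
    dotProduct_comm (σ *ᵥ v), ← hσ.isHermitian.star_dotProduct_mulVec u v, norm_star, ← sq] at this

lemma conjTranspose_mul_mul_transpose_of_apply {ι : Type*} (f : ι → n → 𝕜) (σ : Matrix n n 𝕜)
    (k l : ι) : ((of f)ᵀᴴ * σ * (of f)ᵀ) k l = star (f k) ⬝ᵥ σ *ᵥ f l := by
  simp only [mul_apply, conjTranspose_apply, transpose_apply, of_apply, dotProduct, mulVec,
    Finset.sum_mul, Finset.mul_sum, Pi.star_apply, mul_assoc]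
  exact Finset.sum_comm

variable [DecidableEq n]

lemma PosSemidef.trace_conjTranspose_mul_mul_le {ι : Type*} [Fintype ι] [DecidableEq ι]
    {σ : Matrix n n 𝕜} (hσ : σ.PosSemidef) {V : Matrix n ι 𝕜}
    (hV : Vᴴ * V = 1) : (Vᴴ * σ * V).trace ≤ σ.trace := by
  -- `tr σ - tr (Vᴴ σ V) = tr ((1 - V Vᴴ) σ (1 - V Vᴴ))`, as `1 - V Vᴴ` is a Hermitian idempotent
  have hP : IsIdempotentElem (V * Vᴴ) := by
    rw [IsIdempotentElem, Matrix.mul_assoc, ← Matrix.mul_assoc Vᴴ, hV, Matrix.one_mul]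
  have h := (hσ.conjTranspose_mul_mul_same (1 - V * Vᴴ)).trace_nonneg
  rw [conjTranspose_sub, conjTranspose_one, conjTranspose_mul, conjTranspose_conjTranspose,
    trace_mul_cycle, hP.one_sub.eq, sub_mul, one_mul, trace_sub, Matrix.mul_assoc,
    trace_mul_comm] at h
  exact sub_nonneg.mp h

lemma PosSemidef.sum_dotProduct_mulVec_le_trace {ι : Type*} [Fintype ι] [DecidableEq ι]
    {σ : Matrix n n 𝕜} (hσ : σ.PosSemidef) {f : ι → n → 𝕜}
    (hf : ∀ k l, star (f k) ⬝ᵥ f l = (1 : Matrix ι ι 𝕜) k l) :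
    ∑ k, star (f k) ⬝ᵥ σ *ᵥ f k ≤ σ.trace := by
  have hV : (of f)ᵀᴴ * (of f)ᵀ = 1 := by
    ext k l
    rw [← hf, ← Matrix.mul_one (of f)ᵀᴴ, conjTranspose_mul_mul_transpose_of_apply, one_mulVec]
  simpa only [trace, diag, conjTranspose_mul_mul_transpose_of_apply] using
    hσ.trace_conjTranspose_mul_mul_le hV

lemma PosSemidef.dotProduct_mulVec_add_le_trace {σ : Matrix n n 𝕜}
    (hσ : σ.PosSemidef) {u v : n → 𝕜} (hu : star u ⬝ᵥ u = 1) (hv : star v ⬝ᵥ v = 1)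
    (huv : star u ⬝ᵥ v = 0) :
    star u ⬝ᵥ σ *ᵥ u + star v ⬝ᵥ σ *ᵥ v ≤ σ.trace := by
  have hvu : star v ⬝ᵥ u = 0 := by rw [star_dotProduct, huv, star_zero]
  simpa using hσ.sum_dotProduct_mulVec_le_trace (f := ![u, v]) (by
    intro k l
    fin_cases k <;> fin_cases l <;> simp [hu, hv, huv, hvu])

lemma PosSemidef.re_dotProduct_mulVec_le_of_orthogonal {σ : Matrix n n 𝕜}
    (hσ : σ.PosSemidef) {ψ y : n → 𝕜} (hψ : star ψ ⬝ᵥ ψ = 1) (hψy : star ψ ⬝ᵥ y = 0) :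
    RCLike.re (star y ⬝ᵥ σ *ᵥ y)
      ≤ (RCLike.re σ.trace - RCLike.re (star ψ ⬝ᵥ σ *ᵥ ψ)) * RCLike.re (star y ⬝ᵥ y) := by
  rcases eq_or_ne y 0 with rfl | hy
  · simp
  obtain ⟨S, hS, hyy⟩ := RCLike.pos_iff_exists_ofReal.mp (dotProduct_star_self_pos_iff.mpr hy)
  rw [← hyy, RCLike.ofReal_re]
  set c : 𝕜 := (((√S)⁻¹ : ℝ) : 𝕜)
  have hc : ‖c‖ ^ 2 = S⁻¹ := by
    rw [RCLike.norm_ofReal, sq_abs, inv_pow, Real.sq_sqrt hS.le]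
  have hcy : star (c • y) ⬝ᵥ (c • y) = 1 := by
    rw [star_smul_dotProduct_smul, hc, ← hyy, ← RCLike.ofReal_mul, inv_mul_cancel₀ hS.ne',
      RCLike.ofReal_one]
  have hpair := hσ.dotProduct_mulVec_add_le_trace hψ hcy (by
    rw [dotProduct_smul, hψy, smul_zero])
  simp only [mulVec_smul, star_smul_dotProduct_smul, hc] at hpair
  have hre := (RCLike.le_iff_re_im.mp hpair).1
  rw [map_add, RCLike.re_ofReal_mul] at hre
  have := mul_le_mul_of_nonneg_left hre hS.le
  rw [mul_add, ← mul_assoc, mul_inv_cancel₀ hS.ne', one_mul] at this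
  linarith

lemma PosSemidef.re_dotProduct_mulVec_le_of_fidelity {σ : Matrix n n 𝕜} (hσ : σ.PosSemidef)
    (hσtr : σ.trace = 1) {ψ : n → 𝕜} (hψ : star ψ ⬝ᵥ ψ = 1) {e : ℝ} (he : 0 ≤ e)
    (hfid : 1 - e ^ 2 ≤ RCLike.re (star ψ ⬝ᵥ σ *ᵥ ψ)) (x : n → 𝕜) :
    RCLike.re (star x ⬝ᵥ σ *ᵥ x) ≤ ‖star ψ ⬝ᵥ x‖ ^ 2 + e * RCLike.re (star x ⬝ᵥ x) := by
  set a := star ψ ⬝ᵥ x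
  set y := x - a • ψ
  have hψy : star ψ ⬝ᵥ y = 0 := by
    rw [dotProduct_sub, dotProduct_smul, hψ, smul_eq_mul, mul_one, sub_self]
  have hx : x = a • ψ + y := (add_sub_cancel _ _).symm
  have hp : RCLike.re (star ψ ⬝ᵥ σ *ᵥ ψ) ≤ 1 := by
    have := hσ.sum_dotProduct_mulVec_le_trace (f := ![ψ]) (by simp [hψ])
    simpa [hσtr] using (RCLike.le_iff_re_im.mp this).1
  have hQS := hσ.re_dotProduct_mulVec_le_of_orthogonal hψ hψy
  rw [hσtr, RCLike.one_re] at hQS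
  have hcross : RCLike.re (star a * (star ψ ⬝ᵥ σ *ᵥ y)) ≤ ‖a‖ * ‖star ψ ⬝ᵥ σ *ᵥ y‖ := by
    simpa only [norm_mul, norm_star] using RCLike.re_le_norm (star a * (star ψ ⬝ᵥ σ *ᵥ y))
  have hnorm := isHermitian_one.re_dotProduct_mulVec_smul_add a ψ y
  simp only [one_mulVec, hψ, hψy, mul_zero, map_zero, RCLike.one_re] at hnorm
  rw [hx, hnorm, hσ.isHermitian.re_dotProduct_mulVec_smul_add]
  have key := sq_mul_add_two_mul_mul_add_le (A := ‖a‖) he (hσ.re_dotProduct_nonneg ψ) hp hfid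
    (by simpa using PosSemidef.one.re_dotProduct_nonneg y) hQS
    (hσ.norm_dotProduct_mulVec_sq_le ψ y)
  linarith

theorem PosSemidef.posSemidef_vecMulVec_add_smul_one_sub_of_fidelity {σ : Matrix n n 𝕜}
    (hσ : σ.PosSemidef) (hσtr : σ.trace = 1) {ψ : n → 𝕜} (hψ : star ψ ⬝ᵥ ψ = 1) {e : ℝ}
    (he : 0 ≤ e) (hfid : 1 - e ^ 2 ≤ RCLike.re (star ψ ⬝ᵥ σ *ᵥ ψ)) :
    (vecMulVec ψ (star ψ) + e • (1 : Matrix n n 𝕜) - σ).PosSemidef := by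
  have hM : (vecMulVec ψ (star ψ) + e • (1 : Matrix n n 𝕜) - σ).IsHermitian :=
    ((posSemidef_vecMulVec_self_star ψ).isHermitian.add
      (isHermitian_one.smul (IsSelfAdjoint.all e))).sub hσ.isHermitian
  refine posSemidef_iff_dotProduct_mulVec.mpr ⟨hM, fun x => ?_⟩
  refine RCLike.nonneg_iff.mpr ⟨?_, hM.im_star_dotProduct_mulVec_self x⟩
  have := hσ.re_dotProduct_mulVec_le_of_fidelity hσtr hψ he hfid x
  simp only [sub_mulVec, add_mulVec, smul_mulVec, one_mulVec, dotProduct_sub, dotProduct_add,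
    dotProduct_smul, map_sub, map_add, RCLike.smul_re, re_star_dotProduct_vecMulVec_mulVec]
  linarith

end Matrix

theorem operator_bound_for_eps_close_states_mu_zero_general
    (D : ℕ) (ψ : Fin D → ℂ) (hψ : star ψ ⬝ᵥ ψ = 1)
    (ε : ℝ) (hε : 0 ≤ ε)
    (σ : Matrix (Fin D) (Fin D) ℂ) (hσ : σ.PosSemidef) (hσtr : σ.trace = 1)
    (hfid : 1 - ε ≤ (star ψ ⬝ᵥ σ *ᵥ ψ).re) :
    (vecMulVec ψ (star ψ) + Real.sqrt ε • (1 : Matrix (Fin D) (Fin D) ℂ) - σ).PosSemidef :=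
  hσ.posSemidef_vecMulVec_add_smul_one_sub_of_fidelity hσtr hψ (Real.sqrt_nonneg ε)
    (by rwa [Real.sq_sqrt hε])

/-- Any state `σ` that is `ε`-close in fidelity to the unit vector `ψ`
satisfies `σ ⪯ |ψ⟩⟨ψ| + √ε·I` in the Loewner order (the case `μ = 0`). -/
theorem operator_bound_for_eps_close_states_mu_zero
    (D : ℕ) (hD : 1 ≤ D) (ψ : Fin D → ℂ) (hψ : star ψ ⬝ᵥ ψ = 1)
    (ε : ℝ) (hε : 0 ≤ ε)
    (σ : Matrix (Fin D) (Fin D) ℂ) (hσ : σ.PosSemidef) (hσtr : σ.trace = 1)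
    (hfid : 1 - ε ≤ (star ψ ⬝ᵥ σ *ᵥ ψ).re) :
    (vecMulVec ψ (star ψ) + Real.sqrt ε • (1 : Matrix (Fin D) (Fin D) ℂ) - σ).PosSemidef :=
  operator_bound_for_eps_close_states_mu_zero_general D ψ hψ ε hε σ hσ hσtr hfid
end

section
/- Let X, Y, α, β be finite nonempty index types and let dA, dB ≥ 1. For each x ∈ X and a ∈ α let A_{a|x} be a dA×dA positive semidefinite complex matrix with ∑_a A_{a|x} = I_{dA}. For each y ∈ Y and b ∈ β let |ψ_{b|y}⟩ be a unit vector in ℂ^{dB} with target projection P_{b|y} = |ψ_{b|y}⟩⟨ψ_{b|y}|, and let B_{b|y} be a dB×dB positive semidefinite matrix with trace 1 (a lab measurement operator) satisfying Tr(B_{b|y} P_{b|y}) ≥ 1 − ε_{b,y}, where ε_{b,y} ≥ 0. Let c_{a,b,x,y} ≥ 0 be real coefficients, let ρ be a (dA·dB)×(dA·dB) density matrix on the tensor product space, and suppose the target-measurement value satisfies ∑_{a,b,x,y} c_{a,b,x,y} · Tr((A_{a|x} ⊗ P_{b|y}) ρ) ≤ β₀. Then for every real μ ≥ −1: ∑_{a,b,x,y}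 c_{a,b,x,y} · Tr((A_{a|x} ⊗ B_{b|y}) ρ) ≤ (1+μ)·β₀ + (1/2)·∑_{x ∈ X} max_{a ∈ α} [ ∑_{b,y} c_{a,b,x,y} · ( √(μ² + 4 ε_{b,y} (1+μ)) − μ ) ]. -/
/-!
Write `P = |ψ⟩⟨ψ|` and `t = fidelityShift ε μ`. The heart of the matter is the operator inequality
`B ≤ (1 + μ) P + t 1` for every trace-one `B ≥ 0` with `⟨ψ|B|ψ⟩ ≥ 1 - ε`. Split a vector as
`v = c ψ + w` with `w ⊥ ψ` and put `p = ⟨ψ|B|ψ⟩`. Since the compression of `B` to `ψ^⊥` has trace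
`1 - p`, the seminorm `√⟨v|B|v⟩` is at most `|c| √p + ‖w‖ √(1 - p)`, and the square of this is
at most `(1 + μ) |c|² + t ‖v‖²` by AM-GM, because `t (t + μ) = ε (1 + μ)`.

Tensoring with `A_{a|x} ≥ 0` and pairing with `ρ ≥ 0` preserves the inequality. After summing
with the weights `c`, the `P`-terms give `(1 + μ) β₀`, and the identity terms are averages of
`∑_{b,y} c_{abxy} t_{by}` against the weights `Tr((A_{a|x} ⊗ 1) ρ)`, which for each `x` form a
probability distribution on `a`; an average is at most the maximum.
-/

open Matrix ComplexOrder Kronecker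

open scoped MatrixOrder

/-- The nonnegative root `t` of `t (t + μ) = ε (1 + μ)`. -/
noncomputable def fidelityShift (ε μ : ℝ) : ℝ := (√(μ ^ 2 + 4 * ε * (1 + μ)) - μ) / 2

theorem sq_mul_sqrt_one_sub_add_mul_sqrt_le {a b η ε μ : ℝ} (ha : 0 ≤ a) (hb : 0 ≤ b)
    (hη₀ : 0 ≤ η) (hη₁ : η ≤ 1) (hηε : η ≤ ε) (hμ : -1 ≤ μ) :
    (a * √(1 - η) + b * √η) ^ 2 ≤ (1 + μ) * a ^ 2 + fidelityShift ε μ * (a ^ 2 + b ^ 2) := by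
  set S := √(μ ^ 2 + 4 * ε * (1 + μ))
  have hS : S ^ 2 = μ ^ 2 + 4 * ε * (1 + μ) := Real.sq_sqrt (by nlinarith)
  have hμS : |μ| ≤ S := Real.abs_le_sqrt (by nlinarith)
  set t := fidelityShift ε μ
  have ht : t = (S - μ) / 2 := rfl
  have htμ : t * (t + μ) = ε * (1 + μ) := by rw [ht]; nlinarith
  have ht₀ : 0 ≤ t + μ := by rw [ht]; linarith [neg_abs_le μ]
  have hηt : η ≤ t := by nlinarith [le_abs_self μ]
  -- `η (1 - η) ≤ X Y` is what lets AM-GM absorb the cross term into `X a² + Y b²`.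
  set X := t + μ + η
  set Y := t - η
  have hXY : η * (1 - η) ≤ X * Y := by nlinarith
  have hcross : 2 * (a * b * √((1 - η) * η)) ≤ X * a ^ 2 + Y * b ^ 2 :=
    calc 2 * (a * b * √((1 - η) * η)) ≤ 2 * (a * √X) * (b * √Y) := by
          have : √((1 - η) * η) ≤ √X * √Y := by
            rw [← Real.sqrt_mul (by linarith)]; exact Real.sqrt_le_sqrt (by linarith)
          nlinarith [mul_nonneg ha hb]
      _ ≤ (a * √X) ^ 2 + (b * √Y) ^ 2 := two_mul_le_add_sq _ _
      _ = X * a ^ 2 + Y * b ^ 2 := by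
          rw [mul_pow, mul_pow, Real.sq_sqrt (by linarith), Real.sq_sqrt (by linarith)]; ring
  have hexpand : (a * √(1 - η) + b * √η) ^ 2
      = a ^ 2 * (1 - η) + 2 * (a * b * √((1 - η) * η)) + b ^ 2 * η := by
    rw [Real.sqrt_mul (by linarith), add_sq, mul_pow, mul_pow, Real.sq_sqrt (by linarith),
      Real.sq_sqrt hη₀]
    ring
  rw [hexpand]
  nlinarith

theorem Finset.sum_mul_le_sup'_of_sum_eq_one {ι : Type*} {s : Finset ι} (hs : s.Nonempty)
    {w g : ι → ℝ} (hw₀ : ∀ i ∈ s, 0 ≤ w i) (hw₁ : ∑ i ∈ s, w i = 1) :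
    ∑ i ∈ s, g i * w i ≤ s.sup' hs g :=
  calc ∑ i ∈ s, g i * w i ≤ ∑ i ∈ s, s.sup' hs g * w i :=
        Finset.sum_le_sum fun i hi => mul_le_mul_of_nonneg_right (s.le_sup' g hi) (hw₀ i hi)
    _ = s.sup' hs g := by rw [← Finset.mul_sum, hw₁, mul_one]

theorem sum_mul_le_sum_sup'_of_sum_eq_one {X Y α β : Type*} [Fintype X] [Fintype Y]
    [Fintype α] [Fintype β] [Nonempty α] {w : X → α → ℝ} (hw₀ : ∀ x a, 0 ≤ w x a)
    (hw₁ : ∀ x, ∑ a, w x a = 1) (f : α → β → X → Y → ℝ) :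
    ∑ a, ∑ b, ∑ x, ∑ y, f a b x y * w x a ≤
      ∑ x, Finset.univ.sup' Finset.univ_nonempty (fun a => ∑ b, ∑ y, f a b x y) :=
  calc ∑ a, ∑ b, ∑ x, ∑ y, f a b x y * w x a = ∑ a, ∑ x, ∑ b, ∑ y, f a b x y * w x a :=
        Finset.sum_congr rfl fun a _ => Finset.sum_comm
    _ = ∑ x, ∑ a, ∑ b, ∑ y, f a b x y * w x a := Finset.sum_comm
    _ = ∑ x, ∑ a, (∑ b, ∑ y, f a b x y) * w x a := by simp only [Finset.sum_mul]
    _ ≤ _ := Finset.sum_le_sum fun x _ =>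
        Finset.sum_mul_le_sup'_of_sum_eq_one _ (fun a _ => hw₀ x a) (hw₁ x)

namespace Matrix

variable {𝕜 n m : Type*} [RCLike 𝕜] [Fintype n] [Fintype m]

theorem PosSemidef.trace_mul_nonneg_s2 {M N : Matrix n n 𝕜} (hM : M.PosSemidef)
    (hN : N.PosSemidef) : 0 ≤ (M * N).trace := by
  classical
  obtain ⟨D, rfl⟩ := CStarAlgebra.nonneg_iff_eq_star_mul_self.mp hN.nonneg
  rw [← Matrix.mul_assoc, trace_mul_comm, ← Matrix.mul_assoc, star_eq_conjTranspose]
  exact (hM.mul_mul_conjTranspose_same D).trace_nonneg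

theorem trace_mul_le_trace_mul_of_le {M N ρ : Matrix n n 𝕜} (h : M ≤ N) (hρ : ρ.PosSemidef) :
    (M * ρ).trace ≤ (N * ρ).trace := by
  simpa [Matrix.sub_mul, trace_sub] using PosSemidef.trace_mul_nonneg_s2 h hρ

theorem PosSemidef.kronecker_le_kronecker_left {A : Matrix m m 𝕜} (hA : A.PosSemidef)
    {B N : Matrix n n 𝕜} (h : B ≤ N) : A ⊗ₖ B ≤ A ⊗ₖ N := by
  have : A ⊗ₖ N - A ⊗ₖ B = A ⊗ₖ (N - B) := by
    ext; simp [mul_sub]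
  rw [le_iff, this]
  exact hA.kronecker h

theorem sum_trace_kronecker_one_mul [DecidableEq m] [DecidableEq n] {ι : Type*} [Fintype ι]
    {A : ι → Matrix m m 𝕜} (hA : ∑ i, A i = 1) (ρ : Matrix (m × n) (m × n) 𝕜) :
    ∑ i, ((A i ⊗ₖ (1 : Matrix n n 𝕜)) * ρ).trace = ρ.trace := by
  have : ∑ i, A i ⊗ₖ (1 : Matrix n n 𝕜) = 1 := by
    rw [← one_kronecker_one, ← hA]
    ext
    simp [Matrix.sum_apply, Finset.sum_mul]
  rw [← trace_sum, ← Finset.sum_mul, this, Matrix.one_mul]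

theorem IsHermitian.posSemidef_of_re_dotProduct_mulVec_nonneg {M : Matrix n n 𝕜}
    (hM : M.IsHermitian) (h : ∀ v, 0 ≤ RCLike.re (star v ⬝ᵥ M *ᵥ v)) : M.PosSemidef :=
  .of_dotProduct_mulVec_nonneg hM fun v =>
    RCLike.nonneg_iff.mpr ⟨h v, hM.im_star_dotProduct_mulVec_self v⟩

theorem star_dotProduct_self_eq_norm_sq (u : n → 𝕜) :
    star u ⬝ᵥ u = ((‖WithLp.toLp 2 u‖ ^ 2 : ℝ) : 𝕜) := by
  rw [dotProduct_comm, ← EuclideanSpace.inner_toLp_toLp, inner_self_eq_norm_sq_to_K]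
  push_cast; rfl

theorem posSemidef_star_dotProduct_self_smul_one_sub_vecMulVec [DecidableEq n] (u : n → 𝕜) :
    ((star u ⬝ᵥ u) • (1 : Matrix n n 𝕜) - vecMulVec u (star u)).PosSemidef := by
  refine .of_dotProduct_mulVec_nonneg ?_ fun v => ?_
  · refine IsHermitian.sub ?_ (posSemidef_vecMulVec_self_star u).isHermitian
    exact isHermitian_one.smul (star_dotProduct u u).symm
  · have hcs := norm_inner_le_norm (𝕜 := 𝕜) (WithLp.toLp 2 u) (WithLp.toLp 2 v)
    rw [EuclideanSpace.inner_toLp_toLp, dotProduct_comm] at hcs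
    have : star v ⬝ᵥ ((star u ⬝ᵥ u) • (1 : Matrix n n 𝕜) - vecMulVec u (star u)) *ᵥ v
        = (((‖WithLp.toLp 2 u‖ * ‖WithLp.toLp 2 v‖) ^ 2 - ‖star u ⬝ᵥ v‖ ^ 2 : ℝ) : 𝕜) := by
      rw [sub_mulVec, smul_mulVec, one_mulVec, vecMulVec_mulVec, dotProduct_sub, dotProduct_smul,
        op_smul_eq_smul, dotProduct_smul, star_dotProduct_self_eq_norm_sq,
        star_dotProduct_self_eq_norm_sq, star_dotProduct v u]
      simp only [smul_eq_mul, RCLike.star_def, RCLike.mul_conj]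
      push_cast; ring
    rw [this, RCLike.ofReal_nonneg, sub_nonneg]
    gcongr

theorem PosSemidef.dotProduct_mulVec_le_dotProduct_self_mul_trace {C : Matrix n n 𝕜}
    (hC : C.PosSemidef) (u : n → 𝕜) : star u ⬝ᵥ C *ᵥ u ≤ (star u ⬝ᵥ u) * C.trace := by
  classical
  have := hC.trace_mul_nonneg_s2 (posSemidef_star_dotProduct_self_smul_one_sub_vecMulVec u)
  rwa [Matrix.mul_sub, trace_sub, mul_smul_comm, Matrix.mul_one, trace_smul, mul_vecMulVec,
    trace_vecMulVec, dotProduct_comm (C *ᵥ u), sub_nonneg, smul_eq_mul] at this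

theorem PosSemidef.exists_re_dotProduct_mulVec_eq_norm_sq {B : Matrix n n 𝕜}
    (hB : B.PosSemidef) :
    ∃ D : Matrix n n 𝕜, ∀ v, RCLike.re (star v ⬝ᵥ B *ᵥ v) = ‖WithLp.toLp 2 (D *ᵥ v)‖ ^ 2 := by
  classical
  obtain ⟨D, rfl⟩ := CStarAlgebra.nonneg_iff_eq_star_mul_self.mp hB.nonneg
  refine ⟨D, fun v => ?_⟩
  rw [star_eq_conjTranspose, ← mulVec_mulVec, dotProduct_mulVec, vecMul_conjTranspose, star_star,
    star_dotProduct_self_eq_norm_sq, RCLike.ofReal_re]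

theorem PosSemidef.sqrt_re_dotProduct_mulVec_smul_add_le {B : Matrix n n 𝕜}
    (hB : B.PosSemidef) (c : 𝕜) (x y : n → 𝕜) :
    √(RCLike.re (star (c • x + y) ⬝ᵥ B *ᵥ (c • x + y))) ≤
      ‖c‖ * √(RCLike.re (star x ⬝ᵥ B *ᵥ x)) + √(RCLike.re (star y ⬝ᵥ B *ᵥ y)) := by
  obtain ⟨D, hD⟩ := hB.exists_re_dotProduct_mulVec_eq_norm_sq
  simp only [hD, Real.sqrt_sq (norm_nonneg _)]
  rw [mulVec_add, mulVec_smul, WithLp.toLp_add, WithLp.toLp_smul, ← norm_smul c]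
  exact norm_add_le _ _

theorem trace_mul_vecMulVec_star (B : Matrix n n 𝕜) (ψ : n → 𝕜) :
    (B * vecMulVec ψ (star ψ)).trace = star ψ ⬝ᵥ B *ᵥ ψ := by
  rw [mul_vecMulVec, trace_vecMulVec, dotProduct_comm]

theorem vecMulVec_star_mulVec (ψ v : n → 𝕜) :
    vecMulVec ψ (star ψ) *ᵥ v = (star ψ ⬝ᵥ v) • ψ := by
  rw [vecMulVec_mulVec, op_smul_eq_smul]

section RankOne

variable {ψ : n → 𝕜}

theorem vecMulVec_star_mul_self (hψ : star ψ ⬝ᵥ ψ = 1) :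
    vecMulVec ψ (star ψ) * vecMulVec ψ (star ψ) = vecMulVec ψ (star ψ) := by
  rw [vecMulVec_mul_vecMulVec, hψ, one_smul]

theorem star_dotProduct_sub_smul_eq_zero (hψ : star ψ ⬝ᵥ ψ = 1) (v : n → 𝕜) :
    star ψ ⬝ᵥ (v - (star ψ ⬝ᵥ v) • ψ) = 0 := by
  rw [dotProduct_sub, dotProduct_smul, hψ, smul_eq_mul, mul_one, sub_self]

theorem norm_toLp_sq_eq_norm_sq_add_norm_toLp_sub_smul_sq (hψ : star ψ ⬝ᵥ ψ = 1) (v : n → 𝕜) :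
    ‖WithLp.toLp 2 v‖ ^ 2 =
      ‖star ψ ⬝ᵥ v‖ ^ 2 + ‖WithLp.toLp 2 (v - (star ψ ⬝ᵥ v) • ψ)‖ ^ 2 := by
  set c := star ψ ⬝ᵥ v
  have hψ₁ : ‖WithLp.toLp 2 ψ‖ = 1 := by
    rwa [star_dotProduct_self_eq_norm_sq, ← RCLike.ofReal_one, RCLike.ofReal_inj,
      pow_eq_one_iff_of_nonneg (norm_nonneg _) two_ne_zero] at hψ
  have horth : inner 𝕜 (WithLp.toLp 2 (c • ψ)) (WithLp.toLp 2 (v - c • ψ)) = 0 := by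
    rw [EuclideanSpace.inner_toLp_toLp, star_smul, dotProduct_smul, dotProduct_comm,
      star_dotProduct_sub_smul_eq_zero hψ, smul_zero]
  conv_lhs => rw [← add_sub_cancel (c • ψ) v]
  rw [WithLp.toLp_add, norm_add_sq (𝕜 := 𝕜), horth, map_zero, mul_zero, add_zero,
    WithLp.toLp_smul, norm_smul, hψ₁, mul_one]

theorem PosSemidef.dotProduct_mulVec_le_of_star_dotProduct_eq_zero {B : Matrix n n 𝕜}
    (hB : B.PosSemidef) (hψ : star ψ ⬝ᵥ ψ = 1) {w : n → 𝕜} (hw : star ψ ⬝ᵥ w = 0) :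
    star w ⬝ᵥ B *ᵥ w ≤ (star w ⬝ᵥ w) * (B.trace - star ψ ⬝ᵥ B *ᵥ ψ) := by
  classical
  -- Compress `B` to the orthogonal complement of `ψ`; the compression has trace `Tr B - ⟨ψ|B|ψ⟩`.
  set Q : Matrix n n 𝕜 := 1 - vecMulVec ψ (star ψ)
  have hQ : Qᴴ = Q := (isHermitian_one.sub (posSemidef_vecMulVec_self_star ψ).isHermitian).eq
  have hQQ : Q * Q = Q := by
    simp only [Q, Matrix.mul_sub, Matrix.sub_mul, Matrix.one_mul, Matrix.mul_one,
      vecMulVec_star_mul_self hψ, sub_self, sub_zero]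
  have hQw : Q *ᵥ w = w := by
    simp [Q, sub_mulVec, vecMulVec_star_mulVec, hw]
  have hQB : (Q * B).trace = B.trace - star ψ ⬝ᵥ B *ᵥ ψ := by
    rw [Matrix.sub_mul, Matrix.one_mul, trace_sub, trace_mul_comm, trace_mul_vecMulVec_star]
  have := (hB.conjTranspose_mul_mul_same Q).dotProduct_mulVec_le_dotProduct_self_mul_trace w
  rwa [← mulVec_mulVec, ← mulVec_mulVec, hQw, dotProduct_mulVec, ← star_mulVec, hQ, hQw,
    trace_mul_cycle, hQQ, hQB] at this

end RankOne

section Fidelity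

variable {ψ : n → 𝕜} {B : Matrix n n 𝕜} {ε μ : ℝ}

theorem re_dotProduct_mulVec_le_of_fidelity (hψ : star ψ ⬝ᵥ ψ = 1) (hB : B.PosSemidef)
    (hBtr : B.trace = 1) (hμ : -1 ≤ μ) (hfid : 1 - ε ≤ RCLike.re (star ψ ⬝ᵥ B *ᵥ ψ))
    (v : n → 𝕜) :
    RCLike.re (star v ⬝ᵥ B *ᵥ v) ≤
      (1 + μ) * ‖star ψ ⬝ᵥ v‖ ^ 2 + fidelityShift ε μ * ‖WithLp.toLp 2 v‖ ^ 2 := by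
  set p := RCLike.re (star ψ ⬝ᵥ B *ᵥ ψ)
  set c := star ψ ⬝ᵥ v
  set w := v - c • ψ
  have hp₀ : 0 ≤ p := hB.re_dotProduct_nonneg ψ
  have hp₁ : p ≤ 1 := by
    simpa [hψ, hBtr] using RCLike.re_le_re (hB.dotProduct_mulVec_le_dotProduct_self_mul_trace ψ)
  have hwB : RCLike.re (star w ⬝ᵥ B *ᵥ w) ≤ (1 - p) * ‖WithLp.toLp 2 w‖ ^ 2 := by
    have := RCLike.re_le_re (hB.dotProduct_mulVec_le_of_star_dotProduct_eq_zero hψ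
      (star_dotProduct_sub_smul_eq_zero hψ v))
    rwa [star_dotProduct_self_eq_norm_sq, hBtr, RCLike.re_ofReal_mul, map_sub,
      RCLike.one_re, mul_comm] at this
  have htri : √(RCLike.re (star v ⬝ᵥ B *ᵥ v)) ≤
      ‖c‖ * √(1 - (1 - p)) + ‖WithLp.toLp 2 w‖ * √(1 - p) :=
    calc √(RCLike.re (star v ⬝ᵥ B *ᵥ v)) ≤ ‖c‖ * √p + √(RCLike.re (star w ⬝ᵥ B *ᵥ w)) := by
          conv_lhs => rw [← add_sub_cancel (c • ψ) v]
          exact hB.sqrt_re_dotProduct_mulVec_smul_add_le c ψ w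
      _ ≤ ‖c‖ * √(1 - (1 - p)) + ‖WithLp.toLp 2 w‖ * √(1 - p) := by
          rw [sub_sub_cancel, mul_comm ‖_‖, ← Real.sqrt_sq (norm_nonneg (WithLp.toLp 2 w)),
            ← Real.sqrt_mul (by positivity)]
          gcongr
          linarith
  calc RCLike.re (star v ⬝ᵥ B *ᵥ v) = √(RCLike.re (star v ⬝ᵥ B *ᵥ v)) ^ 2 :=
        (Real.sq_sqrt (hB.re_dotProduct_nonneg v)).symm
    _ ≤ (‖c‖ * √(1 - (1 - p)) + ‖WithLp.toLp 2 w‖ * √(1 - p)) ^ 2 := by gcongr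
    _ ≤ (1 + μ) * ‖c‖ ^ 2 + fidelityShift ε μ * ‖WithLp.toLp 2 v‖ ^ 2 := by
        rw [norm_toLp_sq_eq_norm_sq_add_norm_toLp_sub_smul_sq hψ]
        exact sq_mul_sqrt_one_sub_add_mul_sqrt_le (norm_nonneg _) (norm_nonneg _)
          (by linarith) (by linarith) (by linarith) hμ

theorem le_smul_vecMulVec_add_fidelityShift_smul_one [DecidableEq n] (hψ : star ψ ⬝ᵥ ψ = 1)
    (hB : B.PosSemidef) (hBtr : B.trace = 1) (hμ : -1 ≤ μ)
    (hfid : 1 - ε ≤ RCLike.re (B * vecMulVec ψ (star ψ)).trace) :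
    B ≤ (1 + μ) • vecMulVec ψ (star ψ) + fidelityShift ε μ • (1 : Matrix n n 𝕜) := by
  rw [trace_mul_vecMulVec_star] at hfid
  refine IsHermitian.posSemidef_of_re_dotProduct_mulVec_nonneg ?_ fun v => ?_
  · exact (((posSemidef_vecMulVec_self_star ψ).isHermitian.smul (.all _)).add
      (isHermitian_one.smul (.all _))).sub hB.isHermitian
  · have hPv : RCLike.re (star v ⬝ᵥ vecMulVec ψ (star ψ) *ᵥ v) = ‖star ψ ⬝ᵥ v‖ ^ 2 := by
      rw [vecMulVec_star_mulVec, dotProduct_smul, star_dotProduct v ψ, smul_eq_mul,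
        RCLike.star_def, RCLike.mul_conj]
      norm_cast
    have hv : RCLike.re (star v ⬝ᵥ v) = ‖WithLp.toLp 2 v‖ ^ 2 := by
      rw [star_dotProduct_self_eq_norm_sq, RCLike.ofReal_re]
    simp only [sub_mulVec, add_mulVec, smul_mulVec, one_mulVec, dotProduct_sub,
      dotProduct_add, dotProduct_smul, map_sub, map_add, RCLike.smul_re, hPv, hv]
    linarith [re_dotProduct_mulVec_le_of_fidelity hψ hB hBtr hμ hfid v]

theorem re_trace_kronecker_mul_le_of_fidelity [DecidableEq n] {A : Matrix m m 𝕜}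
    (hA : A.PosSemidef) (hψ : star ψ ⬝ᵥ ψ = 1) (hB : B.PosSemidef) (hBtr : B.trace = 1)
    (hμ : -1 ≤ μ) (hfid : 1 - ε ≤ RCLike.re (B * vecMulVec ψ (star ψ)).trace)
    {ρ : Matrix (m × n) (m × n) 𝕜} (hρ : ρ.PosSemidef) :
    RCLike.re ((A ⊗ₖ B) * ρ).trace ≤
      (1 + μ) * RCLike.re ((A ⊗ₖ vecMulVec ψ (star ψ)) * ρ).trace
        + fidelityShift ε μ * RCLike.re ((A ⊗ₖ (1 : Matrix n n 𝕜)) * ρ).trace := by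
  have := RCLike.re_le_re <| trace_mul_le_trace_mul_of_le (hA.kronecker_le_kronecker_left
    (le_smul_vecMulVec_add_fidelityShift_smul_one hψ hB hBtr hμ hfid)) hρ
  simpa [kronecker_add, kronecker_smul, Matrix.add_mul, trace_add, RCLike.smul_re] using this

end Fidelity

end Matrix

theorem corrected_steering_bound_general
    {X Y α β : Type*} [Fintype X] [Fintype Y] [Fintype α] [Fintype β]
    [Nonempty α]
    (dA dB : ℕ)
    (A : X → α → Matrix (Fin dA) (Fin dA) ℂ)
    (hApos : ∀ x a, (A x a).PosSemidef)
    (hAsum : ∀ x, ∑ a, A x a = 1)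
    (ψ : Y → β → Fin dB → ℂ)
    (hψ : ∀ y b, star (ψ y b) ⬝ᵥ ψ y b = 1)
    (B : Y → β → Matrix (Fin dB) (Fin dB) ℂ)
    (hBpos : ∀ y b, (B y b).PosSemidef)
    (hBtr : ∀ y b, (B y b).trace = 1)
    (ε : β → Y → ℝ)
    (hfid : ∀ y b, 1 - ε b y ≤ ((B y b * vecMulVec (ψ y b) (star (ψ y b))).trace).re)
    (c : α → β → X → Y → ℝ) (hc : ∀ a b x y, 0 ≤ c a b x y)
    (ρ : Matrix (Fin dA × Fin dB) (Fin dA × Fin dB) ℂ)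
    (hρ : ρ.PosSemidef) (hρtr : ρ.trace = 1)
    (β₀ : ℝ)
    (htarget : ∑ a, ∑ b, ∑ x, ∑ y, c a b x y *
        (((A x a ⊗ₖ vecMulVec (ψ y b) (star (ψ y b))) * ρ).trace).re ≤ β₀)
    (μ : ℝ) (hμ : -1 ≤ μ) :
    ∑ a, ∑ b, ∑ x, ∑ y, c a b x y * (((A x a ⊗ₖ B y b) * ρ).trace).re ≤
      (1 + μ) * β₀ + (1 / 2) * ∑ x, Finset.univ.sup' Finset.univ_nonempty
        (fun a => ∑ b, ∑ y, c a b x y * (Real.sqrt (μ ^ 2 + 4 * ε b y * (1 + μ)) - μ)) := by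
  set w : X → α → ℝ := fun x a => (((A x a ⊗ₖ (1 : Matrix (Fin dB) (Fin dB) ℂ)) * ρ).trace).re
  have hw₀ : ∀ x a, 0 ≤ w x a := fun x a =>
    (Complex.le_def.mp (((hApos x a).kronecker PosSemidef.one).trace_mul_nonneg_s2 hρ)).1
  have hw₁ : ∀ x, ∑ a, w x a = 1 := fun x => by
    simp [w, ← Complex.re_sum, sum_trace_kronecker_one_mul (hAsum x), hρtr]
  calc ∑ a, ∑ b, ∑ x, ∑ y, c a b x y * (((A x a ⊗ₖ B y b) * ρ).trace).re
      ≤ ∑ a, ∑ b, ∑ x, ∑ y, ((1 + μ) * (c a b x y *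
          (((A x a ⊗ₖ vecMulVec (ψ y b) (star (ψ y b))) * ρ).trace).re)
        + 1 / 2 * (c a b x y * (√(μ ^ 2 + 4 * ε b y * (1 + μ)) - μ) * w x a)) := by
        gcongr with a _ b _ x _ y _
        have := mul_le_mul_of_nonneg_left (re_trace_kronecker_mul_le_of_fidelity (hApos x a)
          (hψ y b) (hBpos y b) (hBtr y b) hμ (hfid y b) hρ) (hc a b x y)
        simp only [fidelityShift, RCLike.re_to_complex] at this
        simp only [w]
        linarith
    _ = (1 + μ) * ∑ a, ∑ b, ∑ x, ∑ y, c a b x y *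
          (((A x a ⊗ₖ vecMulVec (ψ y b) (star (ψ y b))) * ρ).trace).re
        + 1 / 2 * ∑ a, ∑ b, ∑ x, ∑ y,
          c a b x y * (√(μ ^ 2 + 4 * ε b y * (1 + μ)) - μ) * w x a := by
        simp only [Finset.sum_add_distrib, Finset.mul_sum]
    _ ≤ _ := by
        gcongr
        · linarith
        · exact sum_mul_le_sum_sup'_of_sum_eq_one hw₀ hw₁ _

/-- Main result: corrected steering bound under imprecise measurements for the
trusted party.  If the target value of the steering functional is at most `β₀`,
then for any lab measurement operators `B_{b|y}` (PSD, trace one) that are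
`ε_{b,y}`-close in fidelity to the rank-one target projections `P_{b|y}`,
the lab value is bounded by
`(1+μ)β₀ + ½ ∑_x max_a ∑_{b,y} c_{abxy} (√(μ²+4ε_{b,y}(1+μ)) − μ)` for every `μ ≥ −1`. -/
theorem corrected_steering_bound
    {X Y α β : Type*} [Fintype X] [Fintype Y] [Fintype α] [Fintype β]
    [Nonempty X] [Nonempty Y] [Nonempty α] [Nonempty β]
    (dA dB : ℕ) (hdA : 1 ≤ dA) (hdB : 1 ≤ dB)
    (A : X → α → Matrix (Fin dA) (Fin dA) ℂ)
    (hApos : ∀ x a, (A x a).PosSemidef)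
    (hAsum : ∀ x, ∑ a, A x a = 1)
    (ψ : Y → β → Fin dB → ℂ)
    (hψ : ∀ y b, star (ψ y b) ⬝ᵥ ψ y b = 1)
    (B : Y → β → Matrix (Fin dB) (Fin dB) ℂ)
    (hBpos : ∀ y b, (B y b).PosSemidef)
    (hBtr : ∀ y b, (B y b).trace = 1)
    (ε : β → Y → ℝ) (hε : ∀ b y, 0 ≤ ε b y)
    (hfid : ∀ y b, 1 - ε b y ≤ ((B y b * vecMulVec (ψ y b) (star (ψ y b))).trace).re)
    (c : α → β → X → Y → ℝ) (hc : ∀ a b x y, 0 ≤ c a b x y)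
    (ρ : Matrix (Fin dA × Fin dB) (Fin dA × Fin dB) ℂ)
    (hρ : ρ.PosSemidef) (hρtr : ρ.trace = 1)
    (β₀ : ℝ)
    (htarget : ∑ a, ∑ b, ∑ x, ∑ y, c a b x y *
        (((A x a ⊗ₖ vecMulVec (ψ y b) (star (ψ y b))) * ρ).trace).re ≤ β₀)
    (μ : ℝ) (hμ : -1 ≤ μ) :
    ∑ a, ∑ b, ∑ x, ∑ y, c a b x y * (((A x a ⊗ₖ B y b) * ρ).trace).re ≤
      (1 + μ) * β₀ + (1 / 2) * ∑ x, Finset.univ.sup' Finset.univ_nonempty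
        (fun a => ∑ b, ∑ y, c a b x y * (Real.sqrt (μ ^ 2 + 4 * ε b y * (1 + μ)) - μ)) :=
  corrected_steering_bound_general dA dB A hApos hAsum ψ hψ B hBpos hBtr ε hfid c hc ρ hρ hρtr β₀
    htarget μ hμ
end

section
/- Let β₀, χ, ε be reals with 0 < β₀ < χ and 0 ≤ ε ≤ 1 − β₀/χ. Then for every real μ ≥ −1: (1+μ)·β₀ + (χ/2)·(√(μ² + 4ε(1+μ)) − μ) ≥ β₀ − ε(2β₀ − χ) + 2√(ε(1−ε) β₀ (χ − β₀)). -/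
set_option maxHeartbeats 800000


/-- Lower-bound half of the evaluation of the one-parameter minimization in the
corrected steering bound with equal imprecision parameters. -/
theorem corrected_bound_minimization_lower_bound
    (β₀ χ ε : ℝ) (hβ₀ : 0 < β₀) (hβ₀χ : β₀ < χ)
    (hε0 : 0 ≤ ε) (hε1 : ε ≤ 1 - β₀ / χ)
    (μ : ℝ) (hμ : -1 ≤ μ) :
    β₀ - ε * (2 * β₀ - χ) + 2 * Real.sqrt (ε * (1 - ε) * β₀ * (χ - β₀)) ≤
      (1 + μ) * β₀ + (χ / 2) * (Real.sqrt (μ ^ 2 + 4 * ε * (1 + μ)) - μ) := by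
  have hχ : 0 < χ := hβ₀.trans hβ₀χ
  have hε1' : ε ≤ 1 - β₀ / χ := hε1
  have hεlt : ε < 1 := by
    have : 0 < β₀ / χ := div_pos hβ₀ hχ
    linarith
  set s := Real.sqrt (μ ^ 2 + 4 * ε * (1 + μ)) with hsdef
  set t := Real.sqrt (ε * (1 - ε) * β₀ * (χ - β₀)) with htdef
  have hs0 : 0 ≤ s := Real.sqrt_nonneg _
  have ht0 : 0 ≤ t := Real.sqrt_nonneg _
  have hrad : 0 ≤ μ ^ 2 + 4 * ε * (1 + μ) := by nlinarith [sq_nonneg μ]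
  have hs : s ^ 2 = μ ^ 2 + 4 * ε * (1 + μ) := Real.sq_sqrt hrad
  have ht : t ^ 2 = ε * (1 - ε) * β₀ * (χ - β₀) := by
    apply Real.sq_sqrt
    have h1 : 0 ≤ 1 - ε := by linarith
    have h2 : 0 ≤ χ - β₀ := by linarith
    have := mul_nonneg (mul_nonneg (mul_nonneg hε0 h1) hβ₀.le) h2
    linarith
  have hD : 0 < β₀ * (χ - β₀) := by nlinarith
  -- key inequality
  have key : 2 * t + (χ / 2 - β₀) * (μ + 2 * ε) ≤ χ / 2 * s := by
    rcases le_or_gt (2 * t + (χ / 2 - β₀) * (μ + 2 * ε)) 0 with h | h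
    · nlinarith
    · have h1 : β₀ * (χ - β₀) * s ^ 2 = β₀ * (χ - β₀) * (μ ^ 2 + 4 * ε * (1 + μ)) := by
        rw [hs]
      have h2 : β₀ * (χ - β₀) * t ^ 2 = β₀ * (χ - β₀) * (ε * (1 - ε) * β₀ * (χ - β₀)) := by
        rw [ht]
      have hkey2 : β₀ * (χ - β₀) *
          ((χ / 2 * s) ^ 2 - (2 * t + (χ / 2 - β₀) * (μ + 2 * ε)) ^ 2) =
          (β₀ * (χ - β₀) * (μ + 2 * ε) - (χ - 2 * β₀) * t) ^ 2 := by
        linear_combination (β₀ * (χ - β₀) * (χ / 2) ^ 2) * hs -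
          (4 * β₀ * (χ - β₀) + (χ - 2 * β₀) ^ 2) * ht
      have hsq : (2 * t + (χ / 2 - β₀) * (μ + 2 * ε)) ^ 2 ≤ (χ / 2 * s) ^ 2 := by
        nlinarith [hkey2, sq_nonneg (β₀ * (χ - β₀) * (μ + 2 * ε) - (χ - 2 * β₀) * t), hD]
      nlinarith [hsq, h, mul_nonneg (by positivity : (0:ℝ) ≤ χ / 2) hs0]
  linarith [key]
end

section
/- Let β₀, χ, ε be reals with 0 < β₀ < χ and 0 ≤ ε ≤ 1 − β₀/χ. Then there exists a real μ ≥ −1 such that (1+μ)·β₀ + (χ/2)·(√(μ² + 4ε(1+μ)) − μ) = β₀ − ε(2β₀ − χ) + 2√(ε(1−ε) β₀ (χ − β₀)). In particular the infimum over μ ≥ −1 of the left-hand side is attained and equals the right-hand side. -/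
private lemma aux_sq (a b : ℝ) (ha : 0 ≤ a) (h : b ^ 2 ≤ a ^ 2) : 0 ≤ a + b := by
  nlinarith [sq_nonneg (a + b), sq_nonneg b]

/-- Attainment half of the evaluation of the one-parameter minimization in the
corrected steering bound: the infimum over `μ ≥ −1` of
`(1+μ)β₀ + (χ/2)(√(μ²+4ε(1+μ)) − μ)` is attained and equals
`β₀ − ε(2β₀ − χ) + 2√(ε(1−ε)β₀(χ−β₀))`. -/
theorem corrected_bound_minimization_attained
    (β₀ χ ε : ℝ) (hβ₀ : 0 < β₀) (hβ₀χ : β₀ < χ)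
    (hε0 : 0 ≤ ε) (hε1 : ε ≤ 1 - β₀ / χ) :
    IsLeast
      {v : ℝ | ∃ μ : ℝ, -1 ≤ μ ∧
        v = (1 + μ) * β₀ + (χ / 2) * (Real.sqrt (μ ^ 2 + 4 * ε * (1 + μ)) - μ)}
      (β₀ - ε * (2 * β₀ - χ) + 2 * Real.sqrt (ε * (1 - ε) * β₀ * (χ - β₀))) := by
  have hc : (0:ℝ) < χ := hβ₀.trans hβ₀χ
  have hK : (0:ℝ) < χ - β₀ := by linarith
  have hce : χ * ε ≤ χ - β₀ := by
    have := (div_le_iff₀ hc).1 (by linarith [hε1] : β₀ / χ ≤ 1 - ε)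
    nlinarith
  have he1 : ε ≤ 1 := by nlinarith
  set s : ℝ := Real.sqrt (ε * (1 - ε) * β₀ * (χ - β₀)) with hs_def
  have hs0 : 0 ≤ s := Real.sqrt_nonneg _
  have hs2 : s ^ 2 = ε * (1 - ε) * β₀ * (χ - β₀) :=
    Real.sq_sqrt (mul_nonneg (mul_nonneg (mul_nonneg hε0 (by linarith)) hβ₀.le) hK.le)
  have hbK : (0:ℝ) < β₀ * (χ - β₀) := by positivity
  -- key nonnegativity: bK(1-2e) + (c-2b)s ≥ 0
  have key06 : 0 ≤ β₀ * (χ - β₀) * (1 - 2*ε) + (χ - 2*β₀) * s := by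
    rcases le_or_gt (χ * ε) β₀ with hcase | hcase
    · have ha : 0 ≤ β₀ * (χ - β₀) * (1 - 2*ε) := by nlinarith
      have hid : (β₀ * (χ - β₀) * (1 - 2*ε)) ^ 2 - ((χ - 2*β₀) * s) ^ 2
          = β₀ * (χ - β₀) * ((β₀ - χ*ε) * ((χ - β₀) - χ*ε)) := by
        linear_combination (-(χ - 2*β₀) ^ 2) * hs2
      have hq : ((χ - 2*β₀) * s) ^ 2 ≤ (β₀ * (χ - β₀) * (1 - 2*ε)) ^ 2 := by
        nlinarith [hid, mul_nonneg (mul_nonneg hbK.le (by linarith : (0:ℝ) ≤ β₀ - χ*ε))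
          (by linarith : (0:ℝ) ≤ (χ - β₀) - χ*ε)]
      linarith [aux_sq _ _ ha hq]
    · have hc2b : 0 < χ - 2*β₀ := by nlinarith
      have ha : 0 ≤ (χ - 2*β₀) * s := mul_nonneg hc2b.le hs0
      have hid : ((χ - 2*β₀) * s) ^ 2 - (β₀ * (χ - β₀) * (1 - 2*ε)) ^ 2
          = β₀ * (χ - β₀) * ((χ*ε - β₀) * ((χ - β₀) - χ*ε)) := by
        linear_combination ((χ - 2*β₀) ^ 2) * hs2
      have hq : (β₀ * (χ - β₀) * (1 - 2*ε)) ^ 2 ≤ ((χ - 2*β₀) * s) ^ 2 := by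
        nlinarith [hid, mul_nonneg (mul_nonneg hbK.le (by linarith : (0:ℝ) ≤ χ*ε - β₀))
          (by linarith : (0:ℝ) ≤ (χ - β₀) - χ*ε)]
      linarith [aux_sq _ _ ha hq]
  constructor
  · -- membership: the minimum is attained
    refine ⟨(-2*β₀*ε*(χ - β₀) + (χ - 2*β₀) * s) / (β₀ * (χ - β₀)), ?_, ?_⟩
    · rw [le_div_iff₀ hbK]
      linarith
    · set m : ℝ := (-2*β₀*ε*(χ - β₀) + (χ - 2*β₀) * s) / (β₀ * (χ - β₀)) with hm_def
      have hm1 : β₀ * (χ - β₀) * m = -2*β₀*ε*(χ - β₀) + (χ - 2*β₀) * s := by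
        rw [hm_def]; field_simp
      have hA' : (β₀ * (χ - β₀)) ^ 2 * (m ^ 2 + 4 * ε * (1 + m)) = (χ * s) ^ 2 := by
        linear_combination (β₀*(χ - β₀)*m + (-2*β₀*ε*(χ - β₀) + (χ - 2*β₀) * s)
          + 4*ε*β₀*(χ - β₀)) * hm1 + (-4*β₀*(χ - β₀)) * hs2
      have hT1 : (χ * s / (β₀ * (χ - β₀))) * (β₀ * (χ - β₀)) = χ * s :=
        div_mul_cancel₀ _ hbK.ne'
      have hA : m ^ 2 + 4 * ε * (1 + m) = (χ * s / (β₀ * (χ - β₀))) ^ 2 := by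
        apply mul_left_cancel₀ (show ((β₀ * (χ - β₀)) ^ 2) ≠ 0 by positivity)
        linear_combination hA' +
          (-((χ * s / (β₀ * (χ - β₀))) * (β₀ * (χ - β₀)) + χ * s)) * hT1
      rw [hA, Real.sqrt_sq (div_nonneg (mul_nonneg hc.le hs0) hbK.le)]
      apply mul_left_cancel₀ (show (β₀ * (χ - β₀)) ≠ 0 from hbK.ne')
      linear_combination (χ/2 - β₀) * hm1 + (-(χ/2)) * hT1
  · -- lower bound
    rintro v ⟨μ, hμ, rfl⟩
    have hA0 : 0 ≤ μ ^ 2 + 4 * ε * (1 + μ) := by nlinarith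
    set t : ℝ := Real.sqrt (μ ^ 2 + 4 * ε * (1 + μ)) with ht_def
    have ht0 : 0 ≤ t := Real.sqrt_nonneg _
    have ht2 : t ^ 2 = μ ^ 2 + 4 * ε * (1 + μ) := Real.sq_sqrt hA0
    have hid : β₀ * (χ - β₀) * ((χ * t) ^ 2 - ((χ - 2*β₀) * (μ + 2*ε) + 4*s) ^ 2)
        = (2 * (β₀ * (χ - β₀) * (μ + 2*ε) - (χ - 2*β₀) * s)) ^ 2 := by
      linear_combination (β₀ * (χ - β₀) * χ^2) * ht2 +
        (-16*β₀*(χ - β₀) - 4*(χ - 2*β₀)^2) * hs2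
    have hle : ((χ - 2*β₀) * (μ + 2*ε) + 4*s) ^ 2 ≤ (χ * t) ^ 2 := by
      nlinarith [hid, sq_nonneg (2 * (β₀ * (χ - β₀) * (μ + 2*ε) - (χ - 2*β₀) * s))]
    have hfin := aux_sq (χ * t) (-((χ - 2*β₀) * (μ + 2*ε) + 4*s))
      (mul_nonneg hc.le ht0) (by rw [neg_sq]; exact hle)
    linarith [hfin]
end

section
/- Let d ≥ 2 be a natural number, let ν = √((1 + 1/√d)/2), and let ε be a real with 0 ≤ ε ≤ (1/2)(1 − 1/√d). Define vectors in ℂ^d by: ψ_B(0) = ν and ψ_B(k) = √((1 − ν²)/(d−1)) for k ≠ 0; φ(0) = √(1−ε) and φ(k) = √(ε/(d−1)) for k ≠ 0. Let F be the d×d Fourier matrix with entries F_{j,k} = e^{2πi·jk/d}/√d. Then |⟨φ, ψ_B⟩|² + |⟨F φ, ψ_B⟩|² = 1 + 1/√d + (2/√d)·( √(ε(1−ε)(d−1)) − ε ). -/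
/-!
Write `e₀` for the first basis vector and `𝟙` for the all-ones vector. Up to a positive factor,
`ψ_B = √d e₀ + 𝟙 = √d (e₀ + F e₀)`, and `F² e₀ = e₀` because `F²` is the permutation `k ↦ -k`;
so `F ψ_B = ψ_B`. As `F` is symmetric and `ψ_B` is real, `⟨F φ, ψ_B⟩ = ⟨φ, F̄ ψ_B⟩ = ⟨φ, ψ_B⟩`,
and the functional is `2 |⟨φ, ψ_B⟩|²`, an elementary computation in the span of `e₀` and `𝟙`.
-/

open Matrix Finset Complex Real

section TwoLevel

variable {R : Type*} {d : ℕ}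

def twoLevel (d : ℕ) (x y : R) : Fin d → R := fun k => if (k : ℕ) = 0 then x else y

theorem star_twoLevel [Star R] (x y : R) :
    star (twoLevel d x y) = twoLevel d (star x) (star y) := by
  ext k
  simp only [twoLevel, Pi.star_apply]
  split_ifs <;> rfl

theorem sum_twoLevel [Ring R] (hd : 0 < d) (x y : R) :
    ∑ k, twoLevel d x y k = x + ((d : R) - 1) * y := by
  obtain ⟨n, rfl⟩ := Nat.exists_eq_add_of_lt hd
  simp [Fin.sum_univ_succ, twoLevel]

theorem twoLevel_dotProduct_twoLevel [Ring R] (hd : 0 < d) (x y x' y' : R) :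
    twoLevel d x y ⬝ᵥ twoLevel d x' y' = x * x' + ((d : R) - 1) * (y * y') := by
  rw [dotProduct, ← sum_twoLevel hd]
  congr 1 with k
  simp only [twoLevel]
  split_ifs <;> rfl

end TwoLevel

theorem geom_sum_eq_zero_of_pow_eq_one {R : Type*} [CommRing R] [IsDomain R] {ω : R} {n : ℕ}
    (hω : ω ≠ 1) (hωn : ω ^ n = 1) : ∑ i ∈ range n, ω ^ i = 0 :=
  eq_zero_of_ne_zero_of_mul_left_eq_zero (sub_ne_zero.2 hω) (by rw [mul_geom_sum, hωn, sub_self])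

theorem sum_exp_two_pi_I_mul_div {d : ℕ} (hd : 0 < d) (j : Fin d) :
    ∑ k : Fin d, cexp (2 * π * I * (j : ℕ) * (k : ℕ) / d) =
      if (j : ℕ) = 0 then (d : ℂ) else 0 := by
  set ζ := cexp (2 * π * I / d)
  have hζ : IsPrimitiveRoot ζ d := isPrimitiveRoot_exp d hd.ne'
  have hpow (k : ℕ) : cexp (2 * π * I * (j : ℕ) * k / d) = (ζ ^ (j : ℕ)) ^ k := by
    rw [← pow_mul, ← Complex.exp_nat_mul]
    push_cast
    ring_nf
  simp_rw [hpow]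
  rw [Fin.sum_univ_eq_sum_range (fun k => (ζ ^ (j : ℕ)) ^ k)]
  split_ifs with hj
  · simp [hj]
  · refine geom_sum_eq_zero_of_pow_eq_one (hζ.pow_ne_one_of_pos_of_lt hj j.isLt) ?_
    rw [← pow_mul, mul_comm, pow_mul, hζ.pow_eq_one, one_pow]

noncomputable def fourierMatrix (d : ℕ) : Matrix (Fin d) (Fin d) ℂ :=
  of fun j k => cexp (2 * π * I * (j : ℕ) * (k : ℕ) / d) / (√d : ℂ)

theorem fourierMatrix_transpose (d : ℕ) : (fourierMatrix d)ᵀ = fourierMatrix d := by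
  ext j k
  simp only [transpose_apply, fourierMatrix, of_apply]
  ring_nf

theorem fourierMatrix_mulVec_twoLevel {d : ℕ} (hd : 0 < d) (x y : ℂ) :
    fourierMatrix d *ᵥ twoLevel d x y =
      twoLevel d ((x + ((d : ℂ) - 1) * y) / √d) ((x - y) / √d) := by
  ext j
  have hsplit (k : Fin d) : twoLevel d x y k = y + if k = ⟨0, hd⟩ then x - y else 0 := by
    simp only [twoLevel, Fin.ext_iff]
    split_ifs <;> ring
  simp only [mulVec, dotProduct, hsplit, mul_add, sum_add_distrib, ← sum_mul, mul_ite, mul_zero,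
    sum_ite_eq', mem_univ, if_true, fourierMatrix, of_apply, ← sum_div,
    sum_exp_two_pi_I_mul_div hd]
  simp only [twoLevel, Nat.cast_zero, mul_zero, zero_div, Complex.exp_zero]
  split_ifs <;> ring

theorem fourierMatrix_mulVec_twoLevel_sqrt_add_one {d : ℕ} (hd : 0 < d) (y : ℂ) :
    fourierMatrix d *ᵥ twoLevel d ((√d + 1) * y) y = twoLevel d ((√d + 1) * y) y := by
  have hsqrt : (√d : ℂ) ^ 2 = d := by exact_mod_cast Real.sq_sqrt (Nat.cast_nonneg d)
  have hsqrt0 : (√d : ℂ) ≠ 0 := by exact_mod_cast (Real.sqrt_pos.2 (Nat.cast_pos.2 hd)).ne'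
  rw [fourierMatrix_mulVec_twoLevel hd]
  congr 1
  · field_simp
    linear_combination (-y) * hsqrt
  · field_simp
    ring

theorem star_mulVec_dotProduct_of_mulVec_eq_self {n R : Type*} [Fintype n] [CommRing R]
    [StarRing R] {A : Matrix n n R} (hA : Aᵀ = A) {v : n → R} (hv : star v = v)
    (hAv : A *ᵥ v = v) (u : n → R) : star (A *ᵥ u) ⬝ᵥ v = star u ⬝ᵥ v := by
  have hAHv : Aᴴ *ᵥ v = v := by
    rw [← star_star (Aᴴ *ᵥ v), star_mulVec, conjTranspose_conjTranspose, hv, ← mulVec_transpose,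
      hA, hAv, hv]
  rw [star_mulVec, ← dotProduct_mulVec, hAHv]

theorem sq_sqrt_one_sub_sq_div {D ν : ℝ} (hD : 1 < D) (hν : ν = √((1 + 1 / √D) / 2)) :
    √((1 - ν ^ 2) / (D - 1)) ^ 2 = 1 / (2 * √D * (√D + 1)) := by
  set r := √D
  have hr : 1 < r := Real.lt_sqrt zero_le_one |>.2 (by simpa using hD)
  have hr2 : r ^ 2 = D := Real.sq_sqrt (by linarith)
  have hν2 : ν ^ 2 = (1 + 1 / r) / 2 := by rw [hν, Real.sq_sqrt (by positivity)]
  have hν2_le : ν ^ 2 ≤ 1 := by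
    rw [hν2, div_le_one two_pos]
    linarith [(div_le_one (by linarith)).2 hr.le]
  have hr2_sub : r ^ 2 - 1 ≠ 0 := by nlinarith
  rw [Real.sq_sqrt (div_nonneg (by linarith) (by linarith)), hν2, ← hr2]
  field_simp
  ring

theorem eq_sqrt_add_one_mul_sqrt_one_sub_sq_div {D ν : ℝ} (hD : 1 < D)
    (hν : ν = √((1 + 1 / √D) / 2)) : ν = (√D + 1) * √((1 - ν ^ 2) / (D - 1)) := by
  have hr : 0 < √D := Real.sqrt_pos.2 (by linarith)
  refine (pow_left_inj₀ (hν ▸ Real.sqrt_nonneg _) (by positivity) two_ne_zero).1 ?_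
  rw [mul_pow, sq_sqrt_one_sub_sq_div hD hν, hν, Real.sq_sqrt (by positivity)]
  field_simp

theorem two_mul_sq_overlap_eq {D r m a b ε w : ℝ} (hr : 0 < r) (hm : m ≠ 0) (hr2 : r ^ 2 = D)
    (hm2 : m ^ 2 = D - 1) (ha2 : a ^ 2 = 1 - ε) (hb2 : b ^ 2 = ε)
    (hw2 : w ^ 2 = 1 / (2 * r * (r + 1))) :
    2 * (a * ((r + 1) * w) + (D - 1) * (b / m * w)) ^ 2 =
      1 + 1 / r + 2 / r * (b * a * m - ε) := by
  have hfactor : a * ((r + 1) * w) + (D - 1) * (b / m * w) = w * (a * (r + 1) + m * b) := by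
    rw [← hm2, sq, mul_assoc m m, ← mul_assoc m (b / m), mul_div_cancel₀ b hm]
    ring
  rw [hfactor, mul_pow, hw2]
  field_simp
  linear_combination (r + 1) ^ 2 * ha2 + m ^ 2 * hb2 + ε * hm2 - ε * hr2

/-- Value of the two-MUB steering functional for the explicit unsteerable model
with ε-imprecise computational- and Fourier-basis measurements:
`|⟨φ,ψ_B⟩|² + |⟨Fφ,ψ_B⟩|² = 1 + 1/√d + (2/√d)(√(ε(1−ε)(d−1)) − ε)`. -/
theorem two_mub_imprecise_model_value
    (d : ℕ) (hd : 2 ≤ d) (ε : ℝ) (hε0 : 0 ≤ ε)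
    (hε1 : ε ≤ (1 / 2) * (1 - 1 / Real.sqrt d))
    (ν : ℝ) (hν : ν = Real.sqrt ((1 + 1 / Real.sqrt d) / 2))
    (ψB φv : Fin d → ℂ)
    (hψB : ∀ k : Fin d, ψB k =
      if (k : ℕ) = 0 then (ν : ℂ)
      else ((Real.sqrt ((1 - ν ^ 2) / ((d : ℝ) - 1)) : ℝ) : ℂ))
    (hφ : ∀ k : Fin d, φv k =
      if (k : ℕ) = 0 then ((Real.sqrt (1 - ε) : ℝ) : ℂ)
      else ((Real.sqrt (ε / ((d : ℝ) - 1)) : ℝ) : ℂ))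
    (F : Matrix (Fin d) (Fin d) ℂ)
    (hF : ∀ j k : Fin d, F j k =
      Complex.exp (2 * Real.pi * Complex.I * (j : ℕ) * (k : ℕ) / d) / (Real.sqrt d : ℂ)) :
    ‖star φv ⬝ᵥ ψB‖ ^ 2 + ‖star (F *ᵥ φv) ⬝ᵥ ψB‖ ^ 2 =
      1 + 1 / Real.sqrt d +
        (2 / Real.sqrt d) * (Real.sqrt (ε * (1 - ε) * ((d : ℝ) - 1)) - ε) := by
  have hd0 : 0 < d := by omega
  have hD : (1 : ℝ) < d := by exact_mod_cast hd
  have hε_le_one : ε ≤ 1 := by linarith [one_div_nonneg.2 (Real.sqrt_nonneg (d : ℝ))]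
  set w := √((1 - ν ^ 2) / ((d : ℝ) - 1))
  have hψ : ψB = twoLevel d (((√d : ℝ) + 1) * (w : ℂ)) w := by
    ext k
    rw [hψB, eq_sqrt_add_one_mul_sqrt_one_sub_sq_div hD hν]
    push_cast
    rfl
  have hφ' : φv = twoLevel d (√(1 - ε) : ℂ) (√(ε / ((d : ℝ) - 1)) : ℂ) := funext hφ
  have hF' : F = fourierMatrix d := Matrix.ext hF
  have hψ_star : star ψB = ψB := by simp [hψ, star_twoLevel]
  have hFψ : F *ᵥ ψB = ψB := hF' ▸ hψ ▸ fourierMatrix_mulVec_twoLevel_sqrt_add_one hd0 _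
  rw [star_mulVec_dotProduct_of_mulVec_eq_self (hF' ▸ fourierMatrix_transpose d) hψ_star hFψ,
    ← two_mul, hφ', hψ, star_twoLevel, twoLevel_dotProduct_twoLevel hd0]
  simp only [Complex.star_def, Complex.conj_ofReal, ← Complex.ofReal_natCast, ← Complex.ofReal_one,
    ← Complex.ofReal_add, ← Complex.ofReal_sub, ← Complex.ofReal_mul, Complex.norm_real]
  rw [Real.norm_eq_abs, sq_abs, Real.sqrt_div hε0,
    Real.sqrt_mul (mul_nonneg hε0 (by linarith)), Real.sqrt_mul hε0]
  exact two_mul_sq_overlap_eq (by positivity) (Real.sqrt_pos.2 (by linarith)).ne'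
    (Real.sq_sqrt (by positivity)) (Real.sq_sqrt (by linarith)) (Real.sq_sqrt (by linarith))
    (Real.sq_sqrt hε0) (sq_sqrt_one_sub_sq_div hD hν)
end
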